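/- Let A be a finite-dimensional commutative Frobenius C-algebra with semisimple basis (e_i)_{i=1}^r and nonzero values λ_i, and let Z_{g,n} = Σ_i λ_i^{2(g−1)+n} ê_i^{⊗n}. Then the separating gluing relation holds: for g = g_1 + g_2 and a splitting of the n inputs into groups of sizes n_1 and n_2, Z_{g,n}(a_1,...,a_n) = Σ_j Z_{g_1,n_1+1}(a's in group 1, f_j) · Z_{g_2,n_2+1}(a's in group 2, f^j), where (f_j), (f^j) are η-dual bases of A. -/

import Mathlib

open Finset

/-!
Expanding in the `η`-orthonormal basis `b`, the coordinates are `b.coord i x = η (b i) x`, and the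
dual pair `(f, fd)` resolves `η`: `η x y = ∑ⱼ η x (f j) * η y (fd j)`. Hence gluing along `(f, fd)`
contracts the two diagonal sums over `i` and `i'` to `δ_{i i'}`, and the exponents of `λ_i` add up:
`(2(g₁-1) + n₁ + 1) + (2(g₂-1) + n₂ + 1) = 2(g₁+g₂-1) + n₁ + n₂`.
-/

section DualBases

variable {K M ι : Type*} [CommRing K] [AddCommGroup M] [Module K M] [Fintype ι] [DecidableEq ι]
  (η : LinearMap.BilinForm K M)

theorem Module.Basis.coord_eq_bilinForm_of_orthonormal (b : Module.Basis ι K M)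
    (hb : ∀ i j, η (b i) (b j) = if i = j then 1 else 0) (i : ι) (x : M) :
    b.coord i x = η (b i) x := by
  conv_rhs => rw [← b.sum_repr x, map_sum]
  simp [hb, mul_ite]

theorem Module.Basis.repr_eq_bilinForm_of_dual (f : Module.Basis ι K M) (fd : ι → M)
    (hfd : ∀ j k, η (f j) (fd k) = if j = k then 1 else 0) (y : M) (j : ι) :
    f.repr y j = η y (fd j) := by
  conv_rhs => rw [← f.sum_repr y, map_sum, LinearMap.sum_apply]
  simp [hfd]

theorem LinearMap.BilinForm.apply_eq_sum_mul_of_dual (f : Module.Basis ι K M) (fd : ι → M)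
    (hfd : ∀ j k, η (f j) (fd k) = if j = k then 1 else 0) (x y : M) :
    η x y = ∑ j, η x (f j) * η y (fd j) := by
  conv_lhs => rw [← f.sum_repr y, map_sum]
  refine sum_congr rfl fun j _ => ?_
  rw [map_smul, f.repr_eq_bilinForm_of_dual η fd hfd, smul_eq_mul, mul_comm]

theorem Module.Basis.sum_mul_sum_coord_dual (b f : Module.Basis ι K M) (fd : ι → M)
    (hb : ∀ i j, η (b i) (b j) = if i = j then 1 else 0)
    (hfd : ∀ j k, η (f j) (fd k) = if j = k then 1 else 0) (u v : ι → K) :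
    ∑ j, (∑ i, u i * b.coord i (f j)) * (∑ i, v i * b.coord i (fd j)) = ∑ i, u i * v i := by
  have contract : ∀ i i', ∑ j, u i * b.coord i (f j) * (v i' * b.coord i' (fd j))
      = u i * v i' * if i = i' then 1 else 0 := by
    intro i i'
    simp only [b.coord_eq_bilinForm_of_orthonormal η hb]
    rw [← hb, η.apply_eq_sum_mul_of_dual f fd hfd, mul_sum]
    exact sum_congr rfl fun j _ => by ring
  simp only [sum_mul_sum]
  rw [sum_comm]
  refine sum_congr rfl fun i _ => ?_
  rw [sum_comm]
  simp only [contract, mul_ite, mul_one, mul_zero, sum_ite_eq, mem_univ, if_true]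

end DualBases

theorem stmt10_general (A : Type) [CommRing A] [Algebra ℂ A] (r : ℕ)
    (b : Module.Basis (Fin r) ℂ A)
    (η : LinearMap.BilinForm ℂ A)
    (lam : Fin r → ℂ) (hlam : ∀ i, lam i ≠ 0)
    (hη : ∀ i j, η (b i) (b j) = if i = j then 1 else 0)
    (g₁ g₂ n₁ n₂ : ℕ)
    (a₁ : Fin n₁ → A) (a₂ : Fin n₂ → A)
    (f : Module.Basis (Fin r) ℂ A) (fd : Fin r → A)
    (hfd : ∀ j k, η (f j) (fd k) = if j = k then 1 else 0) :
    ∑ i, lam i ^ (2 * (((g₁ : ℤ) + g₂) - 1) + (n₁ + n₂)) *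
        ((∏ k, b.coord i (a₁ k)) * ∏ k, b.coord i (a₂ k))
      = ∑ j,
          (∑ i, lam i ^ (2 * ((g₁ : ℤ) - 1) + (n₁ + 1)) *
            ((∏ k, b.coord i (a₁ k)) * b.coord i (f j))) *
          (∑ i, lam i ^ (2 * ((g₂ : ℤ) - 1) + (n₂ + 1)) *
            ((∏ k, b.coord i (a₂ k)) * b.coord i (fd j))) := by
  simp only [← mul_assoc]
  rw [b.sum_mul_sum_coord_dual η f fd hη hfd]
  refine sum_congr rfl fun i _ => ?_
  have exponents : 2 * (((g₁ : ℤ) + g₂) - 1) + (n₁ + n₂)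
      = (2 * ((g₁ : ℤ) - 1) + (n₁ + 1)) + (2 * ((g₂ : ℤ) - 1) + (n₂ + 1)) := by ring
  rw [exponents, zpow_add₀ (hlam i)]
  ring

/-- Separating gluing relation for the TQFT functionals
`Z_{g,n} = ∑_i λ_i^{2(g−1)+n} ê_i^{⊗n}` of a commutative Frobenius `ℂ`-algebra
with semisimple basis `b` and nonzero values `λ_i`: for `g = g₁ + g₂` and a
splitting of the `n = n₁ + n₂` inputs,
`Z_{g,n}(a) = ∑_j Z_{g₁,n₁+1}(a₁, f_j) · Z_{g₂,n₂+1}(a₂, f^j)`,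
where `(f_j)`, `(f^j)` are `η`-dual bases of `A`. -/
theorem stmt10 (A : Type) [CommRing A] [Algebra ℂ A] (r : ℕ)
    (b : Module.Basis (Fin r) ℂ A)
    (η : LinearMap.BilinForm ℂ A)
    (hsym : ∀ x y : A, η x y = η y x)
    (hnd : ∀ x : A, (∀ y : A, η x y = 0) → x = 0)
    (hinv : ∀ x y z : A, η (x * y) z = η x (y * z))
    (lam : Fin r → ℂ) (hlam : ∀ i, lam i ≠ 0)
    (hη : ∀ i j, η (b i) (b j) = if i = j then 1 else 0)
    (hmul : ∀ i j, b i * b j = if i = j then lam i • b i else 0)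
    (g₁ g₂ n₁ n₂ : ℕ)
    (a₁ : Fin n₁ → A) (a₂ : Fin n₂ → A)
    (f : Module.Basis (Fin r) ℂ A) (fd : Fin r → A)
    (hfd : ∀ j k, η (f j) (fd k) = if j = k then 1 else 0) :
    ∑ i, lam i ^ (2 * (((g₁ : ℤ) + g₂) - 1) + (n₁ + n₂)) *
        ((∏ k, b.coord i (a₁ k)) * ∏ k, b.coord i (a₂ k))
      = ∑ j,
          (∑ i, lam i ^ (2 * ((g₁ : ℤ) - 1) + (n₁ + 1)) *
            ((∏ k, b.coord i (a₁ k)) * b.coord i (f j))) *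
          (∑ i, lam i ^ (2 * ((g₂ : ℤ) - 1) + (n₂ + 1)) *
            ((∏ k, b.coord i (a₂ k)) * b.coord i (fd j))) :=
  stmt10_general A r b η lam hlam hη g₁ g₂ n₁ n₂ a₁ a₂ f fd hfd
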